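/- arXiv:2401.14231 — 11 statements merged into one kernel-verified Lean document; each statement's English description precedes it below -/
import Mathlib

section
/- For all integers k, ℓ ≥ 2, all natural numbers n ≥ 0, t ≥ 1, all j with 0 ≤ j < t, and all b with k^j ≤ b < k^{j+1}, the identity g_{k,ℓ}(k^t·n + b) = (1 − ℓ^j)·g_{k,ℓ}(k^t·n) + ℓ^j·g_{k,ℓ}(k^t·n + 1) holds (as an identity of integers). -/
/-- For integers `k, ℓ ≥ 2`, `g k ℓ 0 = 1` and `g k ℓ n = 1 + ℓ ^ ⌊log_k n⌋` for `n > 0`. -/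
def g (k ℓ : ℕ) (n : ℕ) : ℕ := if n = 0 then 1 else 1 + ℓ ^ Nat.log k n

/-! Appending `t` base-`k` digits to a positive `n` raises `⌊log_k⌋` by exactly `t`, so for
`n > 0` all three values of `g` in the identity coincide and it collapses to `x = (1 - ℓ^j) x + ℓ^j x`.
For `n = 0` it reads `1 + ℓ^j = (1 - ℓ^j) · 1 + ℓ^j · 2`. -/

theorem Nat.log_pow_mul_add_of_lt {b t n c : ℕ} (hb : 1 < b) (hn : n ≠ 0) (hc : c < b ^ t) :
    Nat.log b (b ^ t * n + c) = Nat.log b n + t := by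
  have hdiv : (b ^ t * n + c) / b ^ t = n := by
    rw [Nat.mul_add_div (by positivity), Nat.div_eq_of_lt hc, add_zero]
  have hle : t ≤ Nat.log b (b ^ t * n + c) :=
    Nat.le_log_of_pow_le hb ((Nat.le_mul_of_pos_right _ (Nat.pos_of_ne_zero hn)).trans le_self_add)
  have hlog := Nat.log_div_base_pow b (b ^ t * n + c) t
  rw [hdiv] at hlog
  omega

theorem g_pow_mul_add_of_lt {k ℓ t n c : ℕ} (hk : 1 < k) (hn : n ≠ 0) (hc : c < k ^ t) :
    g k ℓ (k ^ t * n + c) = 1 + ℓ ^ (Nat.log k n + t) := by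
  rw [g, if_neg (by positivity), Nat.log_pow_mul_add_of_lt hk hn hc]

theorem stmt_0_general (k ℓ : ℕ) (hk : 2 ≤ k) (n t j b : ℕ)
    (hj : j < t) (hb₁ : k ^ j ≤ b) (hb₂ : b < k ^ (j + 1)) :
    (g k ℓ (k ^ t * n + b) : ℤ) =
      (1 - (ℓ : ℤ) ^ j) * g k ℓ (k ^ t * n) + (ℓ : ℤ) ^ j * g k ℓ (k ^ t * n + 1) := by
  have hb : b ≠ 0 := (Nat.pow_pos (n := j) (by omega : 0 < k)).trans_le hb₁ |>.ne'
  rcases eq_or_ne n 0 with rfl | hn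
  · simp only [g, mul_zero, zero_add, hb, ↓reduceIte, Nat.log_eq_of_pow_le_of_lt_pow hb₁ hb₂,
      one_ne_zero, Nat.log_one_right, pow_zero]
    push_cast
    ring
  · have hbt : b < k ^ t := hb₂.trans_le (Nat.pow_le_pow_right (by omega) hj)
    have hg_zero := g_pow_mul_add_of_lt (ℓ := ℓ) hk hn (Nat.pow_pos (by omega : 0 < k) : 0 < k ^ t)
    rw [add_zero] at hg_zero
    rw [g_pow_mul_add_of_lt hk hn hbt, hg_zero, g_pow_mul_add_of_lt hk hn (Nat.one_lt_pow (by omega) hk)]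
    ring

theorem stmt_0 (k ℓ : ℕ) (hk : 2 ≤ k) (hℓ : 2 ≤ ℓ) (n t j b : ℕ)
    (ht : 1 ≤ t) (hj : j < t) (hb₁ : k ^ j ≤ b) (hb₂ : b < k ^ (j + 1)) :
    (g k ℓ (k ^ t * n + b) : ℤ) =
      (1 - (ℓ : ℤ) ^ j) * g k ℓ (k ^ t * n) + (ℓ : ℤ) ^ j * g k ℓ (k ^ t * n + 1) :=
  stmt_0_general k ℓ hk n t j b hj hb₁ hb₂
end

section
/- For all integers k, ℓ ≥ 2 and all natural numbers n ≥ 0, the identity g_{k,ℓ}(k^2·n) = −ℓ·g_{k,ℓ}(n) + (ℓ + 1)·g_{k,ℓ}(k·n) holds (as an identity of integers). -/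
/-! Multiplying a positive argument by `k` raises `⌊log_k n⌋` by one, so `g - 1` is multiplied by
`ℓ`; hence `g - 1` is geometric along `n, k n, k² n` and satisfies the stated linear recurrence.
At `n = 0` all three values are `1`. -/

lemma g_zero (k ℓ : ℕ) : g k ℓ 0 = 1 := if_pos rfl

lemma g_base_mul_add {k : ℕ} (ℓ : ℕ) (hk : 1 < k) {n : ℕ} (hn : n ≠ 0) :
    g k ℓ (k * n) + ℓ = ℓ * g k ℓ n + 1 := by
  have hnk : n * k ≠ 0 := mul_ne_zero hn (by omega)
  simp only [g, mul_comm k n, if_neg hn, if_neg hnk, Nat.log_mul_base hk hn]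
  ring

theorem stmt_1_general (k ℓ : ℕ) (hk : 2 ≤ k) (n : ℕ) :
    (g k ℓ (k ^ 2 * n) : ℤ) = -(ℓ : ℤ) * g k ℓ n + ((ℓ : ℤ) + 1) * g k ℓ (k * n) := by
  rcases eq_or_ne n 0 with rfl | hn
  · simp only [mul_zero, g_zero]
    ring
  have h₁ : (g k ℓ (k * n) : ℤ) + ℓ = ℓ * g k ℓ n + 1 := mod_cast g_base_mul_add ℓ hk hn
  have h₂ : (g k ℓ (k * (k * n)) : ℤ) + ℓ = ℓ * g k ℓ (k * n) + 1 :=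
    mod_cast g_base_mul_add ℓ hk (mul_ne_zero (by omega) hn)
  rw [pow_two, mul_assoc]
  linear_combination h₂ - h₁

theorem stmt_1 (k ℓ : ℕ) (hk : 2 ≤ k) (hℓ : 2 ≤ ℓ) (n : ℕ) :
    (g k ℓ (k ^ 2 * n) : ℤ) = -(ℓ : ℤ) * g k ℓ n + ((ℓ : ℤ) + 1) * g k ℓ (k * n) :=
  stmt_1_general k ℓ hk n
end

section
/- For all integers k, ℓ ≥ 2, all natural numbers n ≥ 0, and all a with 1 ≤ a < k, the identity g_{k,ℓ}(k^2·n + a) = −ℓ·g_{k,ℓ}(n) + ℓ·g_{k,ℓ}(k·n) + g_{k,ℓ}(k·n + 1) holds (as an identity of integers). -/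
/-!
Appending a base-`k` digit `b < k` to a positive `m` raises `⌊log_k m⌋` by one, so
`g (k * m + b) = ℓ * g m - ℓ + 1`. Applied to `k ^ 2 * n + a = k * (k * n) + a`, to `k * n`
and to `k * n + 1`, this relation turns the identity into a linear one. For `n = 0` every
value is `1` or `2`.
-/

theorem Nat.log_mul_add_of_lt {b m a : ℕ} (hb : 1 < b) (hm : m ≠ 0) (ha : a < b) :
    Nat.log b (b * m + a) = Nat.log b m + 1 := by
  have hle : b ≤ b * m + a := 
    Nat.le_add_right_of_le (Nat.le_mul_of_pos_right b (Nat.pos_of_ne_zero hm))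
  rw [Nat.log_of_one_lt_of_le hb hle, Nat.mul_add_div (by omega), Nat.div_eq_of_lt ha,
    add_zero]

lemma g_mul_add {k ℓ n a : ℕ} (hk : 2 ≤ k) (hn : n ≠ 0) (ha : a < k) :
    (g k ℓ (k * n + a) : ℤ) = ℓ * g k ℓ n - ℓ + 1 := by
  have hkn : k * n + a ≠ 0 := by positivity
  simp only [g, if_neg hkn, if_neg hn, Nat.log_mul_add_of_lt hk hn ha]
  push_cast
  ring

lemma g_of_pos_of_lt {k ℓ a : ℕ} (ha₁ : 1 ≤ a) (ha₂ : a < k) : g k ℓ a = 2 := by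
  simp [g, Nat.log_of_lt ha₂, Nat.one_le_iff_ne_zero.mp ha₁]

theorem stmt_2_general (k ℓ : ℕ) (hk : 2 ≤ k) (n a : ℕ)
    (ha₁ : 1 ≤ a) (ha₂ : a < k) :
    (g k ℓ (k ^ 2 * n + a) : ℤ) =
      -(ℓ : ℤ) * g k ℓ n + (ℓ : ℤ) * g k ℓ (k * n) + g k ℓ (k * n + 1) := by
  rcases eq_or_ne n 0 with rfl | hn
  · simp only [mul_zero, zero_add]
    rw [g_of_pos_of_lt ha₁ ha₂, g_of_pos_of_lt le_rfl hk, g, if_pos rfl]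
    ring
  · have hkn : k * n ≠ 0 := by positivity
    have h_digit_zero : (g k ℓ (k * n) : ℤ) = ℓ * g k ℓ n - ℓ + 1 := by
      simpa using g_mul_add (a := 0) hk hn (by omega)
    rw [show k ^ 2 * n + a = k * (k * n) + a by ring, g_mul_add hk hkn ha₂,
      g_mul_add hk hn (by omega), h_digit_zero]
    ring

theorem stmt_2 (k ℓ : ℕ) (hk : 2 ≤ k) (hℓ : 2 ≤ ℓ) (n a : ℕ)
    (ha₁ : 1 ≤ a) (ha₂ : a < k) :
    (g k ℓ (k ^ 2 * n + a) : ℤ) =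
      -(ℓ : ℤ) * g k ℓ n + (ℓ : ℤ) * g k ℓ (k * n) + g k ℓ (k * n + 1) :=
  stmt_2_general k ℓ hk n a ha₁ ha₂
end

section
/- For all integers k, ℓ ≥ 2, all natural numbers n ≥ 0, and all b with k ≤ b < k^2, the identity g_{k,ℓ}(k^2·n + b) = −ℓ·g_{k,ℓ}(n) + g_{k,ℓ}(k·n) + ℓ·g_{k,ℓ}(k·n + 1) holds (as an identity of integers). -/
/-!
Write `h n = g k ℓ n - 1`, so that `h 0 = 0` and `h n = ℓ ^ log_k n` otherwise. Appending a base-`k`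
digit to a nonzero `m` raises `log_k` by one, so `h (k * m + r) = ℓ * h m`; for the digit `r = 0`
this holds for `m = 0` as well. Moreover `h (k * m + r)` does not depend on the digit `1 ≤ r < k`.
Writing `b = k * q + r` with `1 ≤ q < k`, both sides of the identity reduce to `ℓ * h (k * n + 1)`.
-/

theorem Nat.log_base_mul_add {k m r : ℕ} (hr : r < k) :
    Nat.log k (k * m + r) = Nat.log k (k * m) := by
  have hdiv : (k * m + r) / k = m := by
    rw [Nat.mul_add_div (by omega), Nat.div_eq_of_lt hr, add_zero]
  rw [← Nat.log_div_mul_self k (k * m + r), hdiv, mul_comm]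

section

variable {k ℓ : ℕ}

theorem g_base_mul_add_eq {m r : ℕ} (hr₀ : 0 < r) (hr : r < k) :
    g k ℓ (k * m + r) = g k ℓ (k * m + 1) := by
  simp only [g, Nat.add_eq_zero_iff, hr₀.ne', Nat.one_ne_zero, and_false, if_false,
    Nat.log_base_mul_add hr, Nat.log_base_mul_add (show 1 < k by omega)]

theorem g_base_mul_add_sub_one (hk : 1 < k) {m r : ℕ} (hm : m ≠ 0) (hr : r < k) :
    (g k ℓ (k * m + r) : ℤ) - 1 = ℓ * ((g k ℓ m : ℤ) - 1) := by
  have hkm : k * m + r ≠ 0 := by positivity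
  rw [g, g, if_neg hkm, if_neg hm, Nat.log_base_mul_add hr, mul_comm, Nat.log_mul_base hk hm]
  push_cast
  ring

theorem g_base_mul_sub_one (hk : 1 < k) (m : ℕ) :
    (g k ℓ (k * m) : ℤ) - 1 = ℓ * ((g k ℓ m : ℤ) - 1) := by
  rcases eq_or_ne m 0 with rfl | hm
  · simp [g]
  · simpa using g_base_mul_add_sub_one (ℓ := ℓ) hk hm (Nat.zero_lt_of_lt hk)

end

theorem stmt_3_general (k ℓ : ℕ) (hk : 2 ≤ k) (n b : ℕ)
    (hb₁ : k ≤ b) (hb₂ : b < k ^ 2) :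
    (g k ℓ (k ^ 2 * n + b) : ℤ) =
      -(ℓ : ℤ) * g k ℓ n + g k ℓ (k * n) + (ℓ : ℤ) * g k ℓ (k * n + 1) := by
  have hk₀ : 0 < k := by omega
  have hq₀ : 0 < b / k := Nat.div_pos hb₁ hk₀
  have hq : b / k < k := Nat.div_lt_of_lt_mul (by rwa [← sq])
  have hsplit : k ^ 2 * n + b = k * (k * n + b / k) + b % k := by
    conv_lhs => rw [← Nat.div_add_mod b k]
    ring
  have hhigh := g_base_mul_add_sub_one (ℓ := ℓ) hk (by positivity : k * n + b / k ≠ 0)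
    (Nat.mod_lt b hk₀)
  rw [← hsplit, g_base_mul_add_eq hq₀ hq] at hhigh
  linear_combination hhigh - g_base_mul_sub_one (ℓ := ℓ) hk n

theorem stmt_3 (k ℓ : ℕ) (hk : 2 ≤ k) (hℓ : 2 ≤ ℓ) (n b : ℕ)
    (hb₁ : k ≤ b) (hb₂ : b < k ^ 2) :
    (g k ℓ (k ^ 2 * n + b) : ℤ) =
      -(ℓ : ℤ) * g k ℓ n + g k ℓ (k * n) + (ℓ : ℤ) * g k ℓ (k * n + 1) :=
  stmt_3_general k ℓ hk n b hb₁ hb₂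
end

section
/- For all integers k, ℓ ≥ 2, every natural number t ≥ 0, and every b with 0 ≤ b < k^t, there exist integers c₀, c₁, c₂ such that g_{k,ℓ}(k^t·n + b) = c₀·g_{k,ℓ}(n) + c₁·g_{k,ℓ}(k·n) + c₂·g_{k,ℓ}(k·n + 1) for all n ≥ 0. In particular, the sequence (g_{k,ℓ}(n))_{n ≥ 0} is k-regular. -/
lemma log_shift (k : ℕ) (hk : 2 ≤ k) (t b n : ℕ) (hn : n ≠ 0) (hb : b < k ^ t) :
    Nat.log k (k ^ t * n + b) = t + Nat.log k n := by
  have hk1 : 1 < k := hk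
  apply Nat.log_eq_of_pow_le_of_lt_pow
  · rw [pow_add]
    calc k ^ t * k ^ Nat.log k n ≤ k ^ t * n :=
          Nat.mul_le_mul_left _ (Nat.pow_log_le_self k hn)
      _ ≤ k ^ t * n + b := Nat.le_add_right _ _
  · calc k ^ t * n + b < k ^ t * n + k ^ t := by omega
      _ = k ^ t * (n + 1) := by ring
      _ ≤ k ^ t * k ^ (Nat.log k n + 1) :=
          Nat.mul_le_mul_left _ (Nat.lt_pow_succ_log_self hk1 n)
      _ = k ^ (t + Nat.log k n + 1) := by rw [← pow_add]; ring_nf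

theorem stmt_4 (k ℓ : ℕ) (hk : 2 ≤ k) (hℓ : 2 ≤ ℓ) (t b : ℕ) (hb : b < k ^ t) :
    ∃ c₀ c₁ c₂ : ℤ, ∀ n : ℕ,
      (g k ℓ (k ^ t * n + b) : ℤ) =
        c₀ * g k ℓ n + c₁ * g k ℓ (k * n) + c₂ * g k ℓ (k * n + 1) := by
  set S : ℤ := ∑ i ∈ Finset.range t, (ℓ : ℤ) ^ i with hS
  set c₂ : ℤ := (g k ℓ b : ℤ) - 1 with hc₂
  refine ⟨1 - S, S - c₂, c₂, fun n => ?_⟩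
  rcases eq_or_ne n 0 with rfl | hn
  · have h0 : g k ℓ 0 = 1 := by simp [g]
    have h1 : g k ℓ 1 = 2 := by simp [g]
    simp only [mul_zero, add_zero, zero_add, h0, h1]
    push_cast
    ring
  · have hk0 : k ^ t * n + b ≠ 0 := by positivity
    have hkn : k * n ≠ 0 := by positivity
    have hkn1 : k * n + 1 ≠ 0 := by positivity
    have l1 : Nat.log k (k ^ t * n + b) = t + Nat.log k n := log_shift k hk t b n hn hb
    have l2 : Nat.log k (k * n) = 1 + Nat.log k n := by
      have := log_shift k hk 1 0 n hn (by simp; omega)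
      simpa using this
    have l3 : Nat.log k (k * n + 1) = 1 + Nat.log k n := by
      have := log_shift k hk 1 1 n hn (by simp; omega)
      simpa using this
    rw [g, g, g, g, if_neg hk0, if_neg hn, if_neg hkn, if_neg hkn1, l1, l2, l3]
    push_cast
    rw [pow_add, pow_add]
    have key : S * ((ℓ : ℤ) - 1) = (ℓ : ℤ) ^ t - 1 := geom_sum_mul (ℓ : ℤ) t
    linear_combination (-(ℓ : ℤ) ^ Nat.log k n) * key
end

section
/- Let k, ℓ ≥ 2 be integers. For all natural numbers r < t, all integers L < U, every natural number n₀ with k^r·n₀ + L ≥ 0, and all real coefficients c_a (L ≤ a < U), it is NOT the case that g_{k,ℓ}(k^t·n) = Σ_{L ≤ a < U} c_a·g_{k,ℓ}(k^r·n + a) holds for all n ≥ n₀ (note that k^r·n + a ≥ 0 for all such n and a). Consequently, the sequence (g_{k,ℓ}(n))_{n ≥ 0} is not k-recursive. -/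
/-!
For `n = k ^ m + d` with `d` a fixed natural number and `m` large, multiplying by `k ^ r` and
shifting by any `a ∈ [L, U)` keeps `k ^ r * n + a` inside the block `[k ^ (r + m), k ^ (r + m + 1))`,
where `g` is constant. So the assumed recurrence at `n` collapses to
`1 + ℓ ^ (t + m) = S * (1 + ℓ ^ (r + m))` with `S = ∑ c a`, for all large `m`. Comparing two
consecutive values of `m` forces `S = ℓ ^ (t - r)` and then `ℓ ^ (t - r) = 1`, impossible as `r < t`.
-/

open Filter Finset

lemma g_eq_of_pow_le_of_lt_pow {k ℓ m n : ℕ} (hle : k ^ m ≤ n) (hlt : n < k ^ (m + 1)) :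
    g k ℓ n = 1 + ℓ ^ m := by
  have hn : n ≠ 0 := by
    rintro rfl
    simp_all [pow_succ]
  rw [g, if_neg hn, Nat.log_eq_of_pow_le_of_lt_pow hle hlt]

lemma g_pow_add {k ℓ m p : ℕ} (hk : 1 < k) (hp : p < k ^ m) :
    g k ℓ (k ^ m + p) = 1 + ℓ ^ m := by
  refine g_eq_of_pow_le_of_lt_pow (Nat.le_add_right _ _) ?_
  rw [pow_succ]
  nlinarith

lemma g_toNat_pow_mul_pow_add_add {k ℓ r m d : ℕ} {a : ℤ} (hk : 1 < k)
    (ha : 0 ≤ (k ^ r * d : ℤ) + a) (hlt : (k ^ r * d : ℤ) + a < k ^ (r + m)) :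
    g k ℓ ((k ^ r * (k ^ m + d : ℕ) : ℤ) + a).toNat = 1 + ℓ ^ (r + m) := by
  lift (k ^ r * d : ℤ) + a to ℕ using ha with p hp
  have hsplit : ((k ^ r * (k ^ m + d : ℕ) : ℤ) + a).toNat = k ^ (r + m) + p := by
    have : (k ^ r * (k ^ m + d : ℕ) : ℤ) + a = (k ^ (r + m) + p : ℕ) := by
      push_cast [pow_add]; linear_combination -hp
    rw [this, Int.toNat_natCast]
  rw [hsplit, g_pow_add hk (by exact_mod_cast hlt)]

lemma eventually_one_add_pow_eq_sum_mul {k ℓ r t n₀ : ℕ} (hk : 1 < k) {L U : ℤ} {c : ℤ → ℝ}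
    (H : ∀ n : ℕ, n₀ ≤ n →
      (g k ℓ (k ^ t * n) : ℝ) = ∑ a ∈ Ico L U, c a * g k ℓ ((k ^ r * n : ℤ) + a).toNat) :
    ∀ᶠ m in atTop, 1 + (ℓ : ℝ) ^ (t + m) = (∑ a ∈ Ico L U, c a) * (1 + (ℓ : ℝ) ^ (r + m)) := by
  -- `d ≥ -L` keeps every `k ^ r * d + a` nonnegative; `m ≥ d + U.toNat` keeps it below `k ^ (r + m)`.
  set d := (-L).toNat
  filter_upwards [eventually_ge_atTop (n₀ + d + U.toNat)] with m hm
  have hm_lt : m < k ^ m := Nat.lt_pow_self hk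
  have hlhs : g k ℓ (k ^ t * (k ^ m + d)) = 1 + ℓ ^ (t + m) := by
    rw [mul_add, ← pow_add]
    refine g_pow_add hk ?_
    rw [pow_add]
    exact Nat.mul_lt_mul_of_pos_left (by omega) (by positivity)
  have hterm : ∀ a ∈ Ico L U,
      g k ℓ ((k ^ r * (k ^ m + d : ℕ) : ℤ) + a).toNat = 1 + ℓ ^ (r + m) := by
    intro a ha
    obtain ⟨haL, haU⟩ := mem_Ico.mp ha
    have hkr : (1 : ℤ) ≤ k ^ r := one_le_pow₀ (by exact_mod_cast hk.le)
    have hd : -L ≤ d := Int.self_le_toNat _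
    have hU : U ≤ U.toNat := Int.self_le_toNat _
    have hbound : ((d + U.toNat : ℕ) : ℤ) ≤ k ^ m := by
      exact_mod_cast (by omega : d + U.toNat ≤ k ^ m)
    refine g_toNat_pow_mul_pow_add_add hk (by nlinarith) ?_
    push_cast at hbound ⊢
    rw [pow_add]
    nlinarith
  have h := H (k ^ m + d) (by omega)
  rw [hlhs, sum_congr rfl fun a ha => by rw [hterm a ha], ← sum_mul] at h
  exact_mod_cast h

lemma not_eventually_one_add_pow_eq_mul {x S : ℝ} (hx : 1 < x) {r t : ℕ} (hrt : r < t) :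
    ¬ ∀ᶠ m in atTop, 1 + x ^ (t + m) = S * (1 + x ^ (r + m)) := by
  intro h
  obtain ⟨N, hN⟩ := eventually_atTop.mp h
  set A := x ^ (r + N)
  set y := x ^ (t - r)
  have hsplit : ∀ j, x ^ (t + (N + j)) = y * A * x ^ j ∧ x ^ (r + (N + j)) = A * x ^ j :=
    fun j => ⟨by rw [← pow_add, ← pow_add]; congr 1; omega, by rw [← pow_add, add_assoc]⟩
  have h0 := hN (N + 0) (by omega)
  have h1 := hN (N + 1) (by omega)
  rw [(hsplit 0).1, (hsplit 0).2] at h0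
  rw [(hsplit 1).1, (hsplit 1).2] at h1
  have hA : 0 < A := by positivity
  have hyS : y = S := by
    have : (y - S) * A * (x - 1) = 0 := by linear_combination h1 - h0
    have hx1 : x - 1 ≠ 0 := by linarith
    simpa [hA.ne', hx1, sub_eq_zero] using this
  have hy : 1 < y := one_lt_pow₀ hx (by omega)
  subst hyS
  simp only [pow_zero, mul_one] at h0
  nlinarith

theorem stmt_6_general (k ℓ : ℕ) (hk : 2 ≤ k) (hℓ : 2 ≤ ℓ) (r t : ℕ) (hrt : r < t)
    (L U : ℤ) (n₀ : ℕ)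
    (c : ℤ → ℝ) :
    ¬ (∀ n : ℕ, n₀ ≤ n →
        (g k ℓ (k ^ t * n) : ℝ) =
          ∑ a ∈ Finset.Ico L U, c a * g k ℓ ((k ^ r * n : ℤ) + a).toNat) := fun H =>
  not_eventually_one_add_pow_eq_mul (by exact_mod_cast hℓ) hrt
    (eventually_one_add_pow_eq_sum_mul hk H)

theorem stmt_6 (k ℓ : ℕ) (hk : 2 ≤ k) (hℓ : 2 ≤ ℓ) (r t : ℕ) (hrt : r < t)
    (L U : ℤ) (hLU : L < U) (n₀ : ℕ) (hn₀ : 0 ≤ (k ^ r * n₀ : ℤ) + L)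
    (c : ℤ → ℝ) :
    ¬ (∀ n : ℕ, n₀ ≤ n →
        (g k ℓ (k ^ t * n) : ℝ) =
          ∑ a ∈ Finset.Ico L U, c a * g k ℓ ((k ^ r * n : ℤ) + a).toNat) :=
  stmt_6_general k ℓ hk hℓ r t hrt L U n₀ c
end

section
/- Let k ≥ 2 and let (Q, δ, q₀, τ) be a k-DFAO with finite state set Q, transition function δ : Q × {0, …, k−1} → Q, initial state q₀ ∈ Q, and output function τ : Q → A (A any set), and let f : ℕ → A be the sequence it generates by reading base-k digits least-significant-digit first: f(n) = τ(δ*(q₀, base-k digits of n, LSD first)). Then there exist natural numbers r < t such that for every b with 0 ≤ b < k^t there exists a with 0 ≤ a < k^r such that f(k^t·n + b) = f(k^r·n + a) for all n ≥ 0. -/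
/-!
For `b < k ^ t` and `n > 0`, the base-`k` expansion of `k ^ t * n + b` is the expansion of `b`
padded with zeros to length `t`, followed by the expansion of `n`. So `f (k ^ t * n + b)` only
depends on `n` and on the state the automaton reaches after reading the padded digits of `b`; the
value at `n = 0` depends on the state reached after the unpadded digits. The set of such pairs of
states over all `b < k ^ t` is a subset of the finite set `Q × Q`, so it takes the same value at
two lengths `r < t`, and each `b < k ^ t` then has a partner `a < k ^ r` with the same pair.
-/

/-- Extended transition function of a DFAO, reading the word left to right
(least-significant digit first): `dstar δ q [] = q` and
`dstar δ q (d :: w) = dstar δ (δ q d) w`. -/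
def dstar {Q D : Type*} (δ : Q → D → Q) : Q → List D → Q
  | q, [] => q
  | q, d :: w => dstar δ (δ q d) w

theorem dstar_append {Q D : Type*} (δ : Q → D → Q) (q : Q) (u v : List D) :
    dstar δ q (u ++ v) = dstar δ (dstar δ q u) v := by
  induction u generalizing q with
  | nil => rfl
  | cons d u ih => exact ih (δ q d)

def Nat.paddedDigits (k t b : ℕ) : List ℕ :=
  k.digits b ++ List.replicate (t - (k.digits b).length) 0

theorem Nat.digits_pow_mul_add {k t b n : ℕ} (hk : 1 < k) (hb : b < k ^ t) (hn : 0 < n) :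
    k.digits (k ^ t * n + b) = Nat.paddedDigits k t b ++ k.digits n := by
  have hlen : (k.digits b).length + (t - (k.digits b).length) = t := by
    have := (Nat.digits_length_le_iff hk b).mpr hb
    omega
  rw [Nat.paddedDigits, Nat.digits_append_zeroes_append_digits hk hn, hlen, add_comm]

section StateProfile

variable {Q : Type*} (δ : Q → ℕ → Q) (q₀ : Q) (k : ℕ)

def stateProfile (t : ℕ) : Set (Q × Q) :=
  (fun b => (dstar δ q₀ (Nat.paddedDigits k t b), dstar δ q₀ (k.digits b))) '' Set.Iio (k ^ t)

theorem exists_lt_stateProfile_eq [Finite Q] :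
    ∃ r t : ℕ, r < t ∧ stateProfile δ q₀ k r = stateProfile δ q₀ k t := by
  obtain ⟨x, y, hxy, hS⟩ := Finite.exists_ne_map_eq_of_infinite (stateProfile δ q₀ k)
  rcases hxy.lt_or_gt with h | h
  · exact ⟨x, y, h, hS⟩
  · exact ⟨y, x, h, hS.symm⟩

theorem exists_pow_mul_add_eq_of_stateProfile_subset {A : Type*} {τ : Q → A} {f : ℕ → A}
    (hk : 1 < k) (hf : ∀ n, f n = τ (dstar δ q₀ (k.digits n))) {r t : ℕ}
    (hS : stateProfile δ q₀ k t ⊆ stateProfile δ q₀ k r) :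
    ∀ b < k ^ t, ∃ a < k ^ r, ∀ n : ℕ, f (k ^ t * n + b) = f (k ^ r * n + a) := by
  intro b hb
  obtain ⟨a, ha, hab⟩ := hS ⟨b, hb, rfl⟩
  obtain ⟨hpad, hdigits⟩ := Prod.mk.inj hab
  refine ⟨a, ha, fun n => ?_⟩
  rcases Nat.eq_zero_or_pos n with rfl | hn
  · simp only [mul_zero, zero_add, hf, hdigits]
  · rw [hf, hf, Nat.digits_pow_mul_add hk hb hn, Nat.digits_pow_mul_add hk ha hn,
      dstar_append, dstar_append, hpad]

end StateProfile

theorem stmt_9 (k : ℕ) (hk : 2 ≤ k) {Q A : Type*} [Fintype Q]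
    (δ : Q → Fin k → Q) (q₀ : Q) (τ : Q → A) (f : ℕ → A)
    (hf : ∀ n : ℕ, f n =
      τ (dstar (fun (q : Q) (d : ℕ) => δ q ⟨d % k, Nat.mod_lt d (by omega)⟩)
          q₀ (Nat.digits k n))) :
    ∃ r t : ℕ, r < t ∧ ∀ b < k ^ t, ∃ a < k ^ r,
      ∀ n : ℕ, f (k ^ t * n + b) = f (k ^ r * n + a) := by
  obtain ⟨r, t, hrt, hS⟩ := exists_lt_stateProfile_eq
    (fun (q : Q) (d : ℕ) => δ q ⟨d % k, Nat.mod_lt d (by omega)⟩) q₀ k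
  exact ⟨r, t, hrt, exists_pow_mul_add_eq_of_stateProfile_subset _ q₀ k hk hf hS.ge⟩
end

section
/- For all natural numbers n ≥ 0: h(3n) = h(n) + (n mod 2), h(3n+1) = h(n) + ((n+1) mod 2), and h(3n+2) = h(n) + (n mod 2). -/
/-- `h 0 = 0`; for `n > 0`, `h n = h (n / 9) + 1` if `n ≡ 1 (mod 3)`,
and `h n = h (n / 3) + (n / 3) % 2` otherwise. -/
def h : ℕ → ℕ
  | 0 => 0
  | (n + 1) =>
    if (n + 1) % 3 = 1 then h ((n + 1) / 9) + 1
    else h ((n + 1) / 3) + ((n + 1) / 3) % 2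
  decreasing_by
  · exact Nat.div_lt_self (Nat.succ_pos n) (by norm_num)
  · exact Nat.div_lt_self (Nat.succ_pos n) (by norm_num)

lemma h_eq (m : ℕ) (hm : 0 < m) :
    h m = if m % 3 = 1 then h (m / 9) + 1 else h (m / 3) + (m / 3) % 2 := by
  obtain ⟨k, rfl⟩ := Nat.exists_eq_succ_of_ne_zero hm.ne'
  rw [h]

lemma h3 (n : ℕ) : h (3 * n) = h n + n % 2 := by
  rcases Nat.eq_zero_or_pos n with rfl | hn
  · simp [h]
  · rw [h_eq _ (by omega), if_neg (by omega),
      Nat.mul_div_cancel_left n (by norm_num)]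

lemma h32 (n : ℕ) : h (3 * n + 2) = h n + n % 2 := by
  rw [h_eq _ (by omega), if_neg (by omega)]
  have : (3 * n + 2) / 3 = n := by omega
  rw [this]

lemma h31 (n : ℕ) : h (3 * n + 1) = h n + (n + 1) % 2 := by
  induction n using Nat.strong_induction_on with
  | _ n ih =>
    rw [h_eq _ (by omega), if_pos (by omega)]
    have h9 : (3 * n + 1) / 9 = n / 3 := by omega
    rw [h9]
    have hdm := Nat.div_add_mod n 3
    set m := n / 3 with hm
    have hr : n % 3 = 0 ∨ n % 3 = 1 ∨ n % 3 = 2 := by omega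
    rcases hr with hr | hr | hr
    · have hn : n = 3 * m := by omega
      rw [hn, h3]; omega
    · have hn : n = 3 * m + 1 := by omega
      rw [hn, ih m (by omega)]; omega
    · have hn : n = 3 * m + 2 := by omega
      rw [hn, h32]; omega

theorem stmt_11 (n : ℕ) :
    h (3 * n) = h n + n % 2 ∧
    h (3 * n + 1) = h n + (n + 1) % 2 ∧
    h (3 * n + 2) = h n + n % 2 := by
  exact ⟨h3 n, h31 n, h32 n⟩
end

section
/- For all natural numbers t ≥ 0, n ≥ 0, and all b with 0 ≤ b < 3^t, the identity h(3^t·n + b) = (1 − h(b))·h(3^t·n) + h(b)·h(3^t·n + 1) holds (as an identity of integers). -/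
lemma h_zero : h 0 = 0 := by
  simp [h]

lemma h_eq_h_div_three_add_mod_two (n : ℕ) : h n = h (n / 3) + n % 2 := by
  induction n using Nat.strong_induction_on with
  | _ n ih =>
    rcases n with _ | k
    · simp [h_zero]
    · rw [h]
      split_ifs with hk
      · -- for `n = 3m + 1`, the rule at `m` turns `h ⌊n/9⌋ = h ⌊m/3⌋` into `h m - m mod 2`
        have ih_div := ih ((k + 1) / 3) (by omega)
        rw [show (k + 1) / 9 = (k + 1) / 3 / 3 by omega]
        omega
      · omega

lemma h_one : h 1 = 1 := by
  rw [h_eq_h_div_three_add_mod_two, h_zero]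

lemma three_pow_mul_mod_two (t n : ℕ) : 3 ^ t * n % 2 = n % 2 := by
  have h3t : 3 ^ t % 2 = 1 := Nat.odd_iff.mp (Odd.pow (by decide))
  rw [Nat.mul_mod, h3t, one_mul, Nat.mod_mod]

lemma natCast_add_emod_two (n b : ℕ) :
    ((n : ℤ) + b) % 2 = (n : ℤ) % 2 + (-1) ^ n * ((b : ℤ) % 2) := by
  rcases Nat.even_or_odd n with hn | hn
  · rw [hn.neg_one_pow]
    have := Nat.even_iff.mp hn
    omega
  · rw [hn.neg_one_pow]
    have := Nat.odd_iff.mp hn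
    omega

lemma h_three_pow_mul_add {t b : ℕ} (n : ℕ) (hb : b < 3 ^ t) :
    (h (3 ^ t * n + b) : ℤ) = h (3 ^ t * n) + (-1) ^ n * h b := by
  induction t generalizing b with
  | zero =>
    obtain rfl : b = 0 := by omega
    simp [h_zero]
  | succ t ih =>
    have hpow : 3 ^ (t + 1) * n = 3 * (3 ^ t * n) := by ring
    have hmod := three_pow_mul_mod_two (t + 1) n
    rw [h_eq_h_div_three_add_mod_two (3 ^ (t + 1) * n + b),
      h_eq_h_div_three_add_mod_two (3 ^ (t + 1) * n), h_eq_h_div_three_add_mod_two b,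
      show (3 ^ (t + 1) * n + b) / 3 = 3 ^ t * n + b / 3 by omega,
      show 3 ^ (t + 1) * n / 3 = 3 ^ t * n by omega,
      show (3 ^ (t + 1) * n + b) % 2 = (n + b) % 2 by omega, hmod]
    push_cast
    rw [ih (by rw [pow_succ] at hb; omega), natCast_add_emod_two]
    ring

theorem stmt_14 (t n b : ℕ) (hb : b < 3 ^ t) :
    (h (3 ^ t * n + b) : ℤ) =
      (1 - (h b : ℤ)) * h (3 ^ t * n) + (h b : ℤ) * h (3 ^ t * n + 1) := by
  rcases Nat.eq_zero_or_pos t with rfl | ht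
  · obtain rfl : b = 0 := by omega
    simp [h_zero]
  · have h_one_lt : 1 < 3 ^ t := Nat.one_lt_pow ht.ne' (by norm_num)
    rw [h_three_pow_mul_add n hb, h_three_pow_mul_add n h_one_lt, h_one]
    ring
end

section
/- For all natural numbers r < t and all real coefficients c₀, c₁, it is NOT the case that h(3^t·n) = c₀·h(3^r·n) + c₁·h(3^r·n + 1) holds for all n ≥ 0. Consequently, the sequence (h(n))_{n ≥ 0} is not strongly 3-recursive. -/
lemma h_three_mul (m : ℕ) : h (3 * m) = h m + m % 2 := by
  rcases Nat.eq_zero_or_pos m with rfl | hm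
  · simp [h_zero]
  obtain ⟨k, hk⟩ : ∃ k, 3 * m = k + 1 := ⟨3 * m - 1, by omega⟩
  rw [hk, h, if_neg (by omega), ← hk, Nat.mul_div_cancel_left m (by norm_num)]

lemma h_three_pow (k : ℕ) : h (3 ^ k) = k + 1 := by
  induction k with
  | zero => exact h_one
  | succ k ih =>
    rw [pow_succ', h_three_mul, ih, Nat.odd_iff.mp (Odd.pow (by decide))]

theorem stmt_15 (r t : ℕ) (hrt : r < t) (c₀ c₁ : ℝ) :
    ¬ (∀ n : ℕ, (h (3 ^ t * n) : ℝ) =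
        c₀ * h (3 ^ r * n) + c₁ * h (3 ^ r * n + 1)) := by
  intro H
  have hc₁ : c₁ = 0 := by simpa [h_zero, h_one, eq_comm] using H 0
  have at_one := H 1
  have at_three := H 3
  simp only [mul_one, ← pow_succ, h_three_pow, hc₁, zero_mul, add_zero] at at_one at_three
  push_cast at at_one at_three
  have hc₀ : c₀ = 1 := by linear_combination at_one - at_three
  have : (r : ℝ) < t := by exact_mod_cast hrt
  rw [hc₀] at at_one
  linarith
end

section
/- For all natural numbers n ≥ 0, the factor complexity of the Thue–Morse sequence satisfies f_t(16n) = f_t(8n) − f_t(8n+1) + 3·f_t(8n+2) − f_t(8n+4) (as an identity of integers). -/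
/-- The Thue–Morse sequence: `tm n` is the parity of the number of 1s in the
binary representation of `n`. -/
def tm (n : ℕ) : ℕ := (Nat.digits 2 n).sum % 2

/-- The factor complexity of the Thue–Morse sequence: the number of distinct
blocks of length `n` occurring in it. -/
noncomputable def tmComplexity (n : ℕ) : ℕ :=
  Set.ncard {w : Fin n → ℕ | ∃ i : ℕ, ∀ j : Fin n, w j = tm (i + j)}

/-!
At an even position `2k` the Thue–Morse word reads the image of its factor at `k` under the
morphism `0 ↦ 01, 1 ↦ 10`; at an odd position `2k + 1` it reads such an image with the first
letter dropped. So the factors of length `n` occurring at even positions are in bijection with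
the factors of length `⌈n/2⌉`, and those at odd positions with the factors of length
`⌈(n+1)/2⌉`. For `n ≥ 4` no factor occurs at both parities, since that would force three equal
consecutive letters. Hence `f(2m) = f(m) + f(m+1)` and `f(2m+1) = 2 f(m+1)` for `m ≥ 2`, and
unfolding these at `16n, 8n+1, 8n+2, 8n+4, 4n+1, 4n+2, 4n+3` gives the identity for `n ≥ 1`.
For `n = 0` it is a finite check: up to length 4 the factors are exactly the binary words
without three equal consecutive letters.
-/

open Set

theorem Set.ncard_range_eq_of_eq_iff {ι α β : Type*} {f : ι → α} {g : ι → β}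
    (h : ∀ a b, f a = f b ↔ g a = g b) : (range f).ncard = (range g).ncard := by
  refine Set.ncard_congr (fun y hy => g hy.choose) (fun _ _ => mem_range_self _) ?_ ?_
  · intro y z hy hz hyz
    rw [← hy.choose_spec, ← hz.choose_spec]
    exact (h _ _).2 hyz
  · rintro _ ⟨a, rfl⟩
    exact ⟨f a, mem_range_self a, (h _ _).1 (mem_range_self a).choose_spec⟩

lemma tm_lt_two (n : ℕ) : tm n < 2 := Nat.mod_lt _ two_pos

lemma tm_two_mul_add (x b : ℕ) (hb : b < 2) : tm (2 * x + b) = (tm x + b) % 2 := by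
  rcases Nat.eq_zero_or_pos (x + b) with h | h
  · obtain ⟨rfl, rfl⟩ : x = 0 ∧ b = 0 := by omega
    rfl
  · unfold tm
    rw [add_comm, Nat.digits_add 2 one_lt_two b x hb (by omega), List.sum_cons]
    omega

lemma tm_two_mul (x : ℕ) : tm (2 * x) = tm x := by
  simpa [Nat.mod_eq_of_lt (tm_lt_two x)] using tm_two_mul_add x 0 two_pos

lemma tm_two_mul_add_one (x : ℕ) : tm (2 * x + 1) = 1 - tm x := by
  have := tm_lt_two x
  rw [tm_two_mul_add x 1 one_lt_two]
  omega

lemma tm_ne_of_eq (i : ℕ) (h : tm i = tm (i + 1)) : tm (i + 1) ≠ tm (i + 2) := by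
  obtain ⟨x, rfl | rfl⟩ := Nat.even_or_odd' i
  · rw [tm_two_mul_add_one, tm_two_mul] at h
    have := tm_lt_two x
    omega
  · rw [show 2 * x + 1 + 1 = 2 * (x + 1) by ring, show 2 * x + 1 + 2 = 2 * (x + 1) + 1 by ring,
      tm_two_mul, tm_two_mul_add_one]
    have := tm_lt_two (x + 1)
    omega

def tmBlock (n i : ℕ) : Fin n → ℕ := fun j => tm (i + j)

lemma tmComplexity_eq_ncard_range (n : ℕ) : tmComplexity n = (range (tmBlock n)).ncard := by
  unfold tmComplexity
  congr 1
  ext w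
  simp [tmBlock, funext_iff, eq_comm]

lemma tmBlock_eq_iff {n i i' : ℕ} :
    tmBlock n i = tmBlock n i' ↔ ∀ j < n, tm (i + j) = tm (i' + j) :=
  ⟨fun h j hj => congrFun h ⟨j, hj⟩, fun h => funext fun j => h j j.isLt⟩

def tripleFreeWords (n : ℕ) : Finset (Fin n → ℕ) :=
  {w ∈ Fintype.piFinset fun _ => Finset.range 2 |
    ∀ j k l : Fin n, (k : ℕ) = j + 1 → (l : ℕ) = k + 1 → ¬(w j = w k ∧ w k = w l)}

lemma tmBlock_mem_tripleFreeWords (n i : ℕ) : tmBlock n i ∈ tripleFreeWords n := by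
  simp only [tripleFreeWords, Finset.mem_filter, Fintype.mem_piFinset, Finset.mem_range, tmBlock]
  refine ⟨fun j => tm_lt_two _, fun j k l hk hl ⟨hjk, hkl⟩ => ?_⟩
  rw [show i + k = i + j + 1 by omega] at hjk hkl
  rw [show i + l = i + j + 2 by omega] at hkl
  exact tm_ne_of_eq (i + j) hjk hkl

lemma range_tmBlock_subset (n : ℕ) : range (tmBlock n) ⊆ tripleFreeWords n := by
  rintro _ ⟨i, rfl⟩
  exact tmBlock_mem_tripleFreeWords n i

lemma tmComplexity_eq_card_tripleFreeWords {n : ℕ} (hn : n ≤ 4) :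
    tmComplexity n = (tripleFreeWords n).card := by
  have hocc : ∀ w ∈ tripleFreeWords n, ∃ i < 16, tmBlock n i = w := by
    interval_cases n <;> decide
  rw [tmComplexity_eq_ncard_range, ← ncard_coe_finset]
  refine congrArg ncard (Subset.antisymm (range_tmBlock_subset n) fun w hw => ?_)
  obtain ⟨i, -, rfl⟩ := hocc w hw
  exact mem_range_self i

lemma tmBlock_two_mul_add_eq_iff {n r : ℕ} (hn : 1 ≤ n) (hr : r < 2) (k k' : ℕ) :
    tmBlock n (2 * k + r) = tmBlock n (2 * k' + r) ↔
      tmBlock ((n + r + 1) / 2) k = tmBlock ((n + r + 1) / 2) k' := by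
  simp only [tmBlock_eq_iff]
  have split (x j : ℕ) : tm (2 * x + r + j) = (tm (x + (r + j) / 2) + (r + j) % 2) % 2 := by
    rw [← tm_two_mul_add _ _ (Nat.mod_lt _ two_pos)]
    congr 1
    omega
  constructor
  · intro h q hq
    obtain ⟨j, hj, rfl⟩ : ∃ j < n, (r + j) / 2 = q := by
      by_cases h' : 2 * q + 1 - r < n
      · exact ⟨2 * q + 1 - r, h', by omega⟩
      · exact ⟨2 * q - r, by omega, by omega⟩
    have := h j hj
    rw [split, split] at this
    have := tm_lt_two (k + (r + j) / 2)
    have := tm_lt_two (k' + (r + j) / 2)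
    omega
  · intro h j hj
    rw [split, split, h _ (by omega)]

lemma tmBlock_two_mul_ne {n : ℕ} (hn : 4 ≤ n) (k k' : ℕ) :
    tmBlock n (2 * k) ≠ tmBlock n (2 * k' + 1) := by
  intro h
  -- the factor reads `a ā b b̄` from `2k` and `c̄ d d̄ e` from `2k' + 1`,
  -- where `c d e = tm k', tm (k' + 1), tm (k' + 2)`; so `c = d = e`
  have e (j : ℕ) (hj : j < 4) := tmBlock_eq_iff.1 h j (by omega)
  have e0 := e 0 (by norm_num)
  have e1 := e 1 (by norm_num)
  have e2 := e 2 (by norm_num)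
  have e3 := e 3 (by norm_num)
  rw [show 2 * k' + 1 + 1 = 2 * (k' + 1) by ring] at e1
  rw [show 2 * k + 2 = 2 * (k + 1) by ring, show 2 * k' + 1 + 2 = 2 * (k' + 1) + 1 by ring] at e2
  rw [show 2 * k + 3 = 2 * (k + 1) + 1 by ring, show 2 * k' + 1 + 3 = 2 * (k' + 2) by ring] at e3
  simp only [add_zero, tm_two_mul, tm_two_mul_add_one] at e0 e1 e2 e3
  have := tm_lt_two k
  have := tm_lt_two k'
  have := tm_lt_two (k + 1)
  have := tm_lt_two (k' + 1)
  exact tm_ne_of_eq k' (by omega) (by omega)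

lemma range_tmBlock_eq_union (n : ℕ) :
    range (tmBlock n) =
      range (fun k => tmBlock n (2 * k)) ∪ range (fun k => tmBlock n (2 * k + 1)) := by
  ext w
  simp only [mem_union, mem_range]
  constructor
  · rintro ⟨i, rfl⟩
    obtain ⟨k, rfl | rfl⟩ := Nat.even_or_odd' i
    exacts [Or.inl ⟨k, rfl⟩, Or.inr ⟨k, rfl⟩]
  · rintro (⟨k, rfl⟩ | ⟨k, rfl⟩) <;> exact ⟨_, rfl⟩

theorem tmComplexity_eq_add {n : ℕ} (hn : 4 ≤ n) :
    tmComplexity n = tmComplexity ((n + 1) / 2) + tmComplexity ((n + 2) / 2) := by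
  have hfin : (range (tmBlock n)).Finite :=
    (tripleFreeWords n).finite_toSet.subset (range_tmBlock_subset n)
  have hdisj :
      Disjoint (range fun k => tmBlock n (2 * k)) (range fun k => tmBlock n (2 * k + 1)) := by
    rw [disjoint_left]
    rintro _ ⟨k, rfl⟩ ⟨k', h⟩
    exact tmBlock_two_mul_ne hn k k' h.symm
  rw [tmComplexity_eq_ncard_range, range_tmBlock_eq_union,
    ncard_union_eq hdisj (hfin.subset (range_subset_iff.2 fun k => mem_range_self (2 * k)))
      (hfin.subset (range_subset_iff.2 fun k => mem_range_self (2 * k + 1))),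
    ncard_range_eq_of_eq_iff fun k k' => by
      simpa using tmBlock_two_mul_add_eq_iff (r := 0) (by omega) two_pos k k',
    ncard_range_eq_of_eq_iff fun k k' => tmBlock_two_mul_add_eq_iff (by omega) one_lt_two k k',
    tmComplexity_eq_ncard_range, tmComplexity_eq_ncard_range]

theorem stmt_16 (n : ℕ) :
    (tmComplexity (16 * n) : ℤ) =
      tmComplexity (8 * n) - tmComplexity (8 * n + 1)
        + 3 * tmComplexity (8 * n + 2) - tmComplexity (8 * n + 4) := by
  rcases Nat.eq_zero_or_pos n with rfl | hn
  · simp only [mul_zero, zero_add, tmComplexity_eq_card_tripleFreeWords (Nat.zero_le 4),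
      tmComplexity_eq_card_tripleFreeWords (by norm_num : 1 ≤ 4),
      tmComplexity_eq_card_tripleFreeWords (by norm_num : 2 ≤ 4),
      tmComplexity_eq_card_tripleFreeWords le_rfl]
    decide
  · have step (m a b : ℕ) (hm : 4 ≤ m) (ha : (m + 1) / 2 = a) (hb : (m + 2) / 2 = b) :
        tmComplexity m = tmComplexity a + tmComplexity b := by
      subst ha hb
      exact tmComplexity_eq_add hm
    have := step (16 * n) (8 * n) (8 * n + 1) (by omega) (by omega) (by omega)
    have := step (8 * n + 1) (4 * n + 1) (4 * n + 1) (by omega) (by omega) (by omega)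
    have := step (8 * n + 2) (4 * n + 1) (4 * n + 2) (by omega) (by omega) (by omega)
    have := step (8 * n + 4) (4 * n + 2) (4 * n + 3) (by omega) (by omega) (by omega)
    have := step (4 * n + 1) (2 * n + 1) (2 * n + 1) (by omega) (by omega) (by omega)
    have := step (4 * n + 2) (2 * n + 1) (2 * n + 2) (by omega) (by omega) (by omega)
    have := step (4 * n + 3) (2 * n + 2) (2 * n + 2) (by omega) (by omega) (by omega)
    omega
end
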